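/- In an SP-structure satisfying Symmetry, Non-negativity, Boundedness, O-Projection, and Factorization: if X is a subspace, x ∈ X, A ⊆ X is an ortho-set with p(x,A) < 1, then any state y with p(y,A) = 0 and p(x,A) + p(x,y) = 1 belongs to X. -/

import Mathlib

/-!
Suppose `y ∉ X = Subgen B`. O-Projection gives `z` orthogonal to `B` with `p y z > 0`; since
`insert z B` is still an ortho-set, `z` is orthogonal to every state of `X`, in particular to `x`
and to `A`. Then `x` and `y` both generate the ortho-set `insert y A`, on which `z` only sees `y`,
so Factorization gives `0 = p z x = p z y * p y x` with `p y x > 0`, forcing `p y z = 0`.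
-/

variable {Ω : Type*}

def IsOrtho (p : Ω → Ω → ℝ) (A : Set Ω) : Prop :=
  ∀ x ∈ A, ∀ y ∈ A, x ≠ y → p x y = 0

noncomputable def pSet (p : Ω → Ω → ℝ) (x : Ω) (A : Set Ω) : ℝ :=
  ∑' a : A, p x a

def Symm (p : Ω → Ω → ℝ) : Prop := ∀ x y, p x y = p y x

def Nonneg (p : Ω → Ω → ℝ) : Prop := ∀ x y, 0 ≤ p x y

def Bounded (p : Ω → Ω → ℝ) : Prop :=
  ∀ (x : Ω) (A : Set Ω), IsOrtho p A →
    Summable (fun a : A => p x a) ∧ pSet p x A ≤ 1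

def OProj (p : Ω → Ω → ℝ) : Prop :=
  ∀ (x : Ω) (A : Set Ω), IsOrtho p A → pSet p x A < 1 →
    ∃ y, pSet p y A = 0 ∧ pSet p x A + p x y = 1

def Factor (p : Ω → Ω → ℝ) : Prop :=
  ∀ (x y z : Ω) (A : Set Ω), IsOrtho p A → pSet p y A = 1 → pSet p z A = 1 →
    p x y = pSet p x A → p x z = p x y * p y z

def Subgen (p : Ω → Ω → ℝ) (A : Set Ω) : Set Ω := {x | pSet p x A = 1}

def IsSubspace (p : Ω → Ω → ℝ) (X : Set Ω) : Prop :=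
  ∃ A, IsOrtho p A ∧ X = Subgen p A

def Standard (p : Ω → Ω → ℝ) : Prop := ∀ x y, p x y = 1 → x = y

section SPStructure

variable {p : Ω → Ω → ℝ}

lemma pSet_insert_of_notMem {x z : Ω} {A : Set Ω} (hz : z ∉ A)
    (hs : Summable (fun a : A => p x a)) :
    pSet p x (insert z A) = p x z + pSet p x A := by
  rw [pSet, Set.insert_eq, Summable.tsum_union_disjoint (Set.disjoint_singleton_left.2 hz)
    ((Set.finite_singleton z).summable _) hs, tsum_singleton, pSet]

lemma pSet_eq_zero_of_forall_mem {z : Ω} {A : Set Ω} (h : ∀ a ∈ A, p z a = 0) :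
    pSet p z A = 0 := by
  simp [pSet, h]

lemma le_pSet_of_mem (h2 : Nonneg p) (h3 : Bounded p) (x : Ω) {A : Set Ω}
    (hA : IsOrtho p A) {a : Ω} (ha : a ∈ A) : p x a ≤ pSet p x A :=
  (h3 x A hA).1.le_tsum ⟨a, ha⟩ fun j _ => h2 x j

lemma eq_zero_of_pSet_eq_zero (h2 : Nonneg p) (h3 : Bounded p) {x : Ω} {A : Set Ω}
    (hA : IsOrtho p A) (h0 : pSet p x A = 0) {a : Ω} (ha : a ∈ A) : p x a = 0 :=
  le_antisymm (h0 ▸ le_pSet_of_mem h2 h3 x hA ha) (h2 x a)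

lemma IsOrtho.insert (h1 : Symm p) {A : Set Ω} (hA : IsOrtho p A) {y : Ω}
    (hy : ∀ a ∈ A, p y a = 0) : IsOrtho p (insert y A) := by
  rintro a (rfl | ha) b (rfl | hb) hab
  · exact absurd rfl hab
  · exact hy b hb
  · exact h1 a _ ▸ hy a ha
  · exact hA a ha b hb hab

lemma apply_self_eq_one (h1 : Symm p) (h3 : Bounded p) (h4 : OProj p) (u : Ω) :
    p u u = 1 := by
  have hortho : IsOrtho p {u} := fun a ha b hb hab => absurd (ha.trans hb.symm) hab
  have hsing (v : Ω) : pSet p v {u} = p v u := tsum_singleton u (p v)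
  refine le_antisymm (hsing u ▸ (h3 u _ hortho).2) (not_lt.1 fun hlt => ?_)
  obtain ⟨v, hv0, hv1⟩ := h4 u {u} hortho (hsing u ▸ hlt)
  rw [hsing] at hv0 hv1
  linarith [h1 u v]

lemma notMem_of_pSet_eq_zero (h1 : Symm p) (h2 : Nonneg p) (h3 : Bounded p) (h4 : OProj p)
    {y : Ω} {A : Set Ω} (hA : IsOrtho p A) (hyA : pSet p y A = 0) : y ∉ A := fun hy => by
  simpa [eq_zero_of_pSet_eq_zero h2 h3 hA hyA hy] using apply_self_eq_one h1 h3 h4 y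

lemma apply_eq_zero_of_mem_subgen (h1 : Symm p) (h2 : Nonneg p) (h3 : Bounded p)
    (h4 : OProj p) {B : Set Ω} (hB : IsOrtho p B) {z : Ω} (hzB : pSet p z B = 0) {u : Ω}
    (hu : u ∈ Subgen p B) : p u z = 0 := by
  have hBz := hB.insert h1 fun b hb => eq_zero_of_pSet_eq_zero h2 h3 hB hzB hb
  have hle := (h3 u _ hBz).2
  rw [pSet_insert_of_notMem (notMem_of_pSet_eq_zero h1 h2 h3 h4 hB hzB) (h3 u B hB).1,
    show pSet p u B = 1 from hu] at hle
  exact le_antisymm (by linarith) (h2 u z)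

lemma apply_eq_zero_of_orthogonal (h1 : Symm p) (h2 : Nonneg p) (h3 : Bounded p)
    (h4 : OProj p) (h5 : Factor p) {A : Set Ω} (hA : IsOrtho p A) {x y z : Ω}
    (hxA : pSet p x A < 1) (hyA : pSet p y A = 0) (hxy : pSet p x A + p x y = 1)
    (hzA : pSet p z A = 0) (hxz : p x z = 0) : p y z = 0 := by
  have hyA' := notMem_of_pSet_eq_zero h1 h2 h3 h4 hA hyA
  have hA' := hA.insert h1 fun a ha => eq_zero_of_pSet_eq_zero h2 h3 hA hyA ha
  have hx : pSet p x (insert y A) = 1 := by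
    rw [pSet_insert_of_notMem hyA' (h3 x A hA).1]; linarith
  have hy : pSet p y (insert y A) = 1 := by
    rw [pSet_insert_of_notMem hyA' (h3 y A hA).1, hyA, apply_self_eq_one h1 h3 h4, add_zero]
  have hz : p z y = pSet p z (insert y A) := by
    rw [pSet_insert_of_notMem hyA' (h3 z A hA).1, hzA, add_zero]
  have hfac : p z x = p z y * p y x := h5 z y x _ hA' hy hx hz
  rw [h1 z x, hxz, h1 y x, eq_comm, mul_eq_zero] at hfac
  exact h1 y z ▸ hfac.resolve_right (by linarith)

end SPStructure

theorem stmt11 (p : Ω → Ω → ℝ) (h1 : Symm p) (h2 : Nonneg p) (h3 : Bounded p)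
    (h4 : OProj p) (h5 : Factor p) (X : Set Ω) (hX : IsSubspace p X)
    (x : Ω) (hx : x ∈ X) (A : Set Ω) (hA : IsOrtho p A) (hAX : A ⊆ X)
    (hxA : pSet p x A < 1) (y : Ω) (hyA : pSet p y A = 0)
    (hxy : pSet p x A + p x y = 1) : y ∈ X := by
  obtain ⟨B, hB, rfl⟩ := hX
  by_contra hyB
  have hlt : pSet p y B < 1 := lt_of_le_of_ne (h3 y B hB).2 hyB
  obtain ⟨z, hzB, hyz⟩ := h4 y B hB hlt
  have hX_perp_z (u : Ω) (hu : u ∈ Subgen p B) : p u z = 0 :=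
    apply_eq_zero_of_mem_subgen h1 h2 h3 h4 hB hzB hu
  have hzA : pSet p z A = 0 :=
    pSet_eq_zero_of_forall_mem fun a ha => h1 z a ▸ hX_perp_z a (hAX ha)
  have hyz0 := apply_eq_zero_of_orthogonal h1 h2 h3 h4 h5 hA hxA hyA hxy hzA (hX_perp_z x hx)
  linarith
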